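/- arXiv:1005.1183 — 3 statements merged into one kernel-verified Lean document; each statement's English description precedes it below -/
import Mathlib

section
/- Let ρ, σ ∈ ℝ satisfy 1 − σ² > 0 and 1 − 2ρ² + σ > 0, and set ξ = 1 − 2ρ² + σ, η = (1+σ)/(1−σ), λ = 1/√(1−σ), κ = 1/√(1−2ρ²+σ). Fix u, v ∈ ℝ and let A = 2λρ − κξ(u−v) + iλξ(u+v) and B = 2λρ + κξ(u−v) + iλξ(u+v) in ℂ. If A ≠ 0, then there exist z₁, z₂ ∈ ℂ such that Az² − 2√(2η)·z + B = A(z − z₁)(z − z₂) for all z ∈ ℂ, with |z₁| < 1 and |z₂| > 1. -/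
/-! Write `A = P - r` and `B = P + r` with `P = 2λρ + iλξ(u+v)` and `r = κξ(u-v)` real, and
`c = √(2η)`. By Vieta and the parallelogram law, the roots of `A z² + b z + B` satisfy
`2 (|z₁|² - 1)(|z₂|² - 1) |A|² = 2|A|² + 2|B|² - |b|² - |b² - 4AB|`. For `b = -2c` the right side
is at most `8 (Re P² - c²)`, because `Re (c² - AB) = c² - Re P² + Im P² + r²`, and
`c² - Re P² = 2λ²ξ > 0`. So exactly one root lies inside the unit circle. -/

theorem quadratic_eq_mul_sub_mul_sub {K : Type*} [Field K] [NeZero (2 : K)] {a b c s : K}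
    (ha : a ≠ 0) (hs : discrim a b c = s * s) (z : K) :
    a * z ^ 2 + b * z + c = a * (z - (-b + s) / (2 * a)) * (z - (-b - s) / (2 * a)) := by
  rw [discrim] at hs
  field_simp
  linear_combination -hs

theorem Complex.two_mul_norm_sq_sub_one_mul_norm_sq_sub_one (z₁ z₂ : ℂ) :
    2 * ((‖z₁‖ ^ 2 - 1) * (‖z₂‖ ^ 2 - 1))
      = 2 * ‖z₁ * z₂‖ ^ 2 + 2 - ‖z₁ + z₂‖ ^ 2 - ‖(z₁ + z₂) ^ 2 - 4 * (z₁ * z₂)‖ := by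
  have hdisc : (z₁ + z₂) ^ 2 - 4 * (z₁ * z₂) = (z₁ - z₂) ^ 2 := by ring
  rw [hdisc, norm_pow, norm_mul]
  have := parallelogram_law_with_norm ℝ z₁ z₂
  linear_combination this

theorem Complex.norm_lt_one_lt_norm_of_quadratic {a b c z₁ z₂ : ℂ} (ha : a ≠ 0)
    (hf : ∀ z, a * z ^ 2 + b * z + c = a * (z - z₁) * (z - z₂))
    (h : 2 * ‖a‖ ^ 2 + 2 * ‖c‖ ^ 2 < ‖b‖ ^ 2 + ‖discrim a b c‖) :
    (‖z₁‖ < 1 ∧ 1 < ‖z₂‖) ∨ (‖z₂‖ < 1 ∧ 1 < ‖z₁‖) := by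
  have hprod : z₁ * z₂ = c / a := by
    rw [eq_div_iff ha]; linear_combination (hf 0).symm
  have hsum : z₁ + z₂ = -b / a := by
    rw [eq_div_iff ha]; linear_combination hf 1 - hf 0
  have hdisc : (z₁ + z₂) ^ 2 - 4 * (z₁ * z₂) = discrim a b c / a ^ 2 := by
    rw [hprod, hsum, discrim]; field_simp
  have hna : 0 < ‖a‖ := norm_pos_iff.mpr ha
  have hneg : (‖z₁‖ ^ 2 - 1) * (‖z₂‖ ^ 2 - 1) < 0 := by
    have key := Complex.two_mul_norm_sq_sub_one_mul_norm_sq_sub_one z₁ z₂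
    rw [hdisc, hprod, hsum, norm_div, norm_div, norm_div, norm_neg, norm_pow] at key
    have hscaled : 2 * ((‖z₁‖ ^ 2 - 1) * (‖z₂‖ ^ 2 - 1)) * ‖a‖ ^ 2
        = 2 * ‖a‖ ^ 2 + 2 * ‖c‖ ^ 2 - (‖b‖ ^ 2 + ‖discrim a b c‖) := by
      rw [key]; field_simp; ring
    nlinarith
  rcases mul_neg_iff.mp hneg with ⟨h₁, h₂⟩ | ⟨h₁, h₂⟩
  · right; constructor <;> nlinarith [norm_nonneg z₁, norm_nonneg z₂]
  · left; constructor <;> nlinarith [norm_nonneg z₁, norm_nonneg z₂]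

theorem Complex.two_mul_norm_sq_add_lt_of_re_sq_lt {P : ℂ} {r c : ℝ} (hPc : P.re ^ 2 < c ^ 2) :
    2 * ‖P - r‖ ^ 2 + 2 * ‖P + r‖ ^ 2
      < ‖(-2 * c : ℂ)‖ ^ 2 + ‖discrim (P - r) (-2 * c) (P + r)‖ := by
  have hre :
      (discrim (P - r) (-2 * c) (P + r)).re = 4 * (c ^ 2 - P.re ^ 2 + P.im ^ 2 + r ^ 2) := by
    simp [discrim, pow_two]; ring
  have hD := hre ▸ Complex.re_le_norm (discrim (P - r) (-2 * c) (P + r))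
  have hb : ‖(-2 * c : ℂ)‖ ^ 2 = 4 * c ^ 2 := by
    simp [mul_pow]; norm_num
  have hPr : ‖P - r‖ ^ 2 + ‖P + r‖ ^ 2 = 2 * (P.re ^ 2 + P.im ^ 2 + r ^ 2) := by
    simp [Complex.sq_norm, Complex.normSq_apply]; ring
  rw [hb]
  linarith

theorem Complex.exists_quadratic_roots_norm_lt_one_lt_norm {P : ℂ} {r c : ℝ}
    (hPc : P.re ^ 2 < c ^ 2) (hA : P - r ≠ 0) :
    ∃ z₁ z₂ : ℂ, (∀ z, (P - r) * z ^ 2 - 2 * c * z + (P + r) = (P - r) * (z - z₁) * (z - z₂)) ∧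
      ‖z₁‖ < 1 ∧ 1 < ‖z₂‖ := by
  obtain ⟨s, hs⟩ := IsAlgClosed.exists_eq_mul_self (discrim (P - r) (-2 * c) (P + r))
  set z₁ := (-(-2 * c) + s) / (2 * (P - r))
  set z₂ := (-(-2 * c) - s) / (2 * (P - r))
  have hf (z : ℂ) : (P - r) * z ^ 2 + -2 * c * z + (P + r) = (P - r) * (z - z₁) * (z - z₂) :=
    quadratic_eq_mul_sub_mul_sub hA hs z
  have hlt := Complex.two_mul_norm_sq_add_lt_of_re_sq_lt (r := r) hPc
  rcases Complex.norm_lt_one_lt_norm_of_quadratic hA hf hlt with h | h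
  · exact ⟨z₁, z₂, fun z => by linear_combination hf z, h⟩
  · exact ⟨z₂, z₁, fun z => by linear_combination hf z, h⟩

theorem poles_inside_outside_general (ρ σ : ℝ) (h1 : 1 - σ ^ 2 > 0) (h2 : 1 - 2 * ρ ^ 2 + σ > 0)
    (ξ η lam kap : ℝ) (hξ : ξ = 1 - 2 * ρ ^ 2 + σ) (hη : η = (1 + σ) / (1 - σ))
    (hlam : lam = 1 / Real.sqrt (1 - σ))
    (u v : ℝ) (A B : ℂ)
    (hA : A = 2 * lam * ρ - kap * ξ * ((u : ℂ) - v) + Complex.I * lam * ξ * ((u : ℂ) + v))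
    (hB : B = 2 * lam * ρ + kap * ξ * ((u : ℂ) - v) + Complex.I * lam * ξ * ((u : ℂ) + v))
    (hA0 : A ≠ 0) :
    ∃ z₁ z₂ : ℂ,
      (∀ z : ℂ, A * z ^ 2 - 2 * (Real.sqrt (2 * η) : ℂ) * z + B = A * (z - z₁) * (z - z₂)) ∧
      ‖z₁‖ < 1 ∧ 1 < ‖z₂‖ := by
  have hσ : 0 < 1 - σ := by nlinarith
  have hlam_sq : lam ^ 2 * (1 - σ) = 1 := by
    rw [hlam, div_pow, one_pow, Real.sq_sqrt hσ.le, one_div_mul_cancel hσ.ne']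
  have hη_eq : 2 * η = (2 * lam * ρ) ^ 2 + 2 * lam ^ 2 * ξ := by
    rw [hη, hξ]; field_simp; linear_combination (-(1 + σ)) * hlam_sq
  have hre_lt : (2 * lam * ρ) ^ 2 < Real.sqrt (2 * η) ^ 2 := by
    have hlam_pos : 0 < lam ^ 2 := by nlinarith
    have : 0 < 2 * lam ^ 2 * ξ := mul_pos (mul_pos two_pos hlam_pos) (hξ ▸ h2)
    rw [Real.sq_sqrt (by nlinarith)]
    linarith
  obtain ⟨z₁, z₂, hf, h₁, h₂⟩ := Complex.exists_quadratic_roots_norm_lt_one_lt_norm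
    (P := 2 * lam * ρ + Complex.I * lam * ξ * (u + v)) (r := kap * ξ * (u - v))
    (c := Real.sqrt (2 * η)) (by simpa using hre_lt)
    (by rw [hA] at hA0; push_cast; convert hA0 using 1; ring)
  refine ⟨z₁, z₂, fun z => ?_, h₁, h₂⟩
  rw [hA, hB]
  push_cast at hf
  linear_combination hf z

theorem poles_inside_outside (ρ σ : ℝ) (h1 : 1 - σ ^ 2 > 0) (h2 : 1 - 2 * ρ ^ 2 + σ > 0)
    (ξ η lam kap : ℝ) (hξ : ξ = 1 - 2 * ρ ^ 2 + σ) (hη : η = (1 + σ) / (1 - σ))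
    (hlam : lam = 1 / Real.sqrt (1 - σ)) (hkap : kap = 1 / Real.sqrt (1 - 2 * ρ ^ 2 + σ))
    (u v : ℝ) (A B : ℂ)
    (hA : A = 2 * lam * ρ - kap * ξ * ((u : ℂ) - v) + Complex.I * lam * ξ * ((u : ℂ) + v))
    (hB : B = 2 * lam * ρ + kap * ξ * ((u : ℂ) - v) + Complex.I * lam * ξ * ((u : ℂ) + v))
    (hA0 : A ≠ 0) :
    ∃ z₁ z₂ : ℂ,
      (∀ z : ℂ, A * z ^ 2 - 2 * (Real.sqrt (2 * η) : ℂ) * z + B = A * (z - z₁) * (z - z₂)) ∧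
      ‖z₁‖ < 1 ∧ 1 < ‖z₂‖ :=
  poles_inside_outside_general ρ σ h1 h2 ξ η lam kap hξ hη hlam u v A B hA hB hA0
end

section
/- Let ρ, σ ∈ ℝ satisfy 1 − σ² > 0 and 1 − 2ρ² + σ > 0, and set ξ = 1 − 2ρ² + σ, η = (1+σ)/(1−σ), λ = 1/√(1−σ), κ = 1/√(1−2ρ²+σ), δ = 2ρ/ξ. Then for all u, v ∈ ℝ, ∫₀^{2π} [2λρ cos θ + iλξ(u+v) cos θ − iκξ(u−v) sin θ − √(2η)]^{−1} dθ = −2π / √(λ²ξ²(u+v−iδ)² + κ²ξ²(−u+v)² + 2η), where √· on ℂ denotes the principal square root. -/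
/-!
Put `E = exp (θ * I)`. For `w ^ 2 = S ^ 2 - (A ^ 2 + B ^ 2)` and `P = S + w`,
`A cos θ + B sin θ - S = -(P / 2) (1 - ν E) (1 - μ / E)` with `ν = (A - B I) / P`,
`μ = (A + B I) / P`. When `|ν|, |μ| < 1` the integral of `((1 - ν E) (1 - μ / E))⁻¹` over a
period is `2π / (1 - ν μ)` by Cauchy's formula at `z = μ` on the unit circle, and
`1 - ν μ = 2 w / P` gives `-2π / w`. In the theorem `A = a + y I`, `B = -x I` with `a, x, y`
real, `|a| < S`, and `w` is the principal root of `S² + x² - (a + y I)²`; then `Re w > 0` is what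
makes `|ν|, |μ| < 1`.
-/

open Complex Metric

theorem integral_inv_one_sub_mul_exp_mul_one_sub_mul_exp {ν μ : ℂ} (hν : ‖ν‖ < 1)
    (hμ : ‖μ‖ < 1) :
    ∫ θ in (0 : ℝ)..2 * Real.pi,
        ((1 - ν * exp (θ * I)) * (1 - μ * exp (-(θ * I))))⁻¹ = 2 * Real.pi / (1 - ν * μ) := by
  have hf : DiffContOnCl ℂ (fun z => (1 - ν * z)⁻¹) (ball 0 1) := by
    refine DifferentiableOn.diffContOnCl_ball (U := closedBall 0 1) ?_ subset_rfl
    refine (by fun_prop : Differentiable ℂ fun z : ℂ => 1 - ν * z).differentiableOn.inv ?_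
    intro z hz h
    have : ‖ν * z‖ < 1 := by
      rw [norm_mul]
      exact (mul_le_of_le_one_right (norm_nonneg _) (mem_closedBall_zero_iff.1 hz)).trans_lt hν
    exact this.ne (by rw [← sub_eq_zero.1 h, norm_one])
  have hC := hf.circleIntegral_sub_inv_smul (mem_ball_zero_iff.2 hμ)
  simp only [circleIntegral, deriv_circleMap, circleMap_zero, ofReal_one, one_mul,
    smul_eq_mul] at hC
  -- on the unit circle `dz = I z dθ` and `1 - μ / z = (z - μ) / z`
  have hcircle : ∀ θ : ℝ, exp (θ * I) * I * ((exp (θ * I) - μ)⁻¹ * (1 - ν * exp (θ * I))⁻¹) =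
      I * ((1 - ν * exp (θ * I)) * (1 - μ * exp (-(θ * I))))⁻¹ := by
    intro θ
    have hE : exp (θ * I) ≠ 0 := exp_ne_zero _
    rw [exp_neg]
    field_simp
  simp only [hcircle, intervalIntegral.integral_const_mul] at hC
  rw [div_eq_mul_inv]
  apply mul_left_cancel₀ I_ne_zero
  rw [hC]
  ring

theorem mul_cos_add_mul_sin_eq_exp (A B : ℂ) (θ : ℝ) :
    A * cos θ + B * sin θ =
      (A - B * I) / 2 * exp (θ * I) + (A + B * I) / 2 * exp (-(θ * I)) := by
  rw [cos, sin, neg_mul]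
  ring_nf

theorem factor_laurent_quadratic {S w m n E E' : ℂ} (hw : w ^ 2 = S ^ 2 - m * n) (hP : S + w ≠ 0)
    (hE : E * E' = 1) :
    n / 2 * E + m / 2 * E' - S =
      -((S + w) / 2) * ((1 - n / (S + w) * E) * (1 - m / (S + w) * E')) := by
  field_simp
  linear_combination hw + n * m * hE

theorem integral_inv_mul_cos_add_mul_sin_sub {A B S w : ℂ}
    (hw : w ^ 2 = S ^ 2 - (A ^ 2 + B ^ 2)) (hm : ‖A + B * I‖ < ‖S + w‖)
    (hn : ‖A - B * I‖ < ‖S + w‖) :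
    ∫ θ in (0 : ℝ)..2 * Real.pi, (A * cos θ + B * sin θ - S)⁻¹ = -2 * Real.pi / w := by
  set P := S + w
  have hP0 : P ≠ 0 := norm_pos_iff.1 ((norm_nonneg _).trans_lt hm)
  have hw' : w ^ 2 = S ^ 2 - (A + B * I) * (A - B * I) := by
    linear_combination hw - B ^ 2 * I_sq
  have hfac : ∀ θ : ℝ, (A * cos θ + B * sin θ - S)⁻¹ = (-(P / 2))⁻¹ *
      ((1 - (A - B * I) / P * exp (θ * I)) * (1 - (A + B * I) / P * exp (-(θ * I))))⁻¹ := by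
    intro θ
    rw [mul_cos_add_mul_sin_eq_exp,
      factor_laurent_quadratic hw' hP0 (by rw [← exp_add]; simp), mul_inv]
  have hlt : ∀ {z : ℂ}, ‖z‖ < ‖P‖ → ‖z / P‖ < 1 := fun h => by
    rwa [norm_div, div_lt_one (norm_pos_iff.2 hP0)]
  simp only [hfac, intervalIntegral.integral_const_mul,
    integral_inv_one_sub_mul_exp_mul_one_sub_mul_exp (hlt hn) (hlt hm)]
  have hden : 1 - (A - B * I) / P * ((A + B * I) / P) = 2 * w / P := by
    field_simp
    linear_combination -hw'
  rw [hden]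
  field_simp

theorem norm_add_mul_I_lt_norm_add {a x y S : ℝ} {w : ℂ} (haS : |a| < S)
    (hw : w ^ 2 = S ^ 2 + x ^ 2 - (a + y * I) ^ 2) (hw_re : 0 < w.re) :
    ‖(a + x : ℂ) + y * I‖ < ‖S + w‖ := by
  have hre : w.re ^ 2 - w.im ^ 2 = S ^ 2 + x ^ 2 - a ^ 2 + y ^ 2 := by
    have h := congrArg re hw
    simp only [sq, sub_re, add_re, mul_re, add_im, mul_im, ofReal_re, ofReal_im, I_re,
      I_im] at h
    linear_combination h
  have hx : |x| < w.re := abs_lt_of_sq_lt_sq (by nlinarith [abs_nonneg a, sq_abs a]) hw_re.le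
  have hax : a * x < S * w.re := by
    calc a * x ≤ |a| * |x| := by rw [← abs_mul]; exact le_abs_self _
      _ < S * w.re := mul_lt_mul'' haS hx (abs_nonneg _) (abs_nonneg _)
  -- `‖S + w‖² - ‖a + x + y I‖² = 2 (S² - a²) + 2 (Im w)² + 2 (S Re w - a x)`
  rw [← sq_lt_sq₀ (norm_nonneg _) (norm_nonneg _), ← normSq_eq_norm_sq, ← normSq_eq_norm_sq,
    normSq_apply, normSq_apply]
  simp only [add_re, add_im, ofReal_re, ofReal_im, mul_re, mul_im, I_re, I_im]
  nlinarith [mul_self_lt_mul_self (abs_nonneg a) haS, abs_mul_abs_self a, sq_nonneg w.im]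

theorem integral_inv_cos_sin_sub_of_real {a x y S : ℝ} {w : ℂ} (haS : |a| < S)
    (hw : w ^ 2 = S ^ 2 + x ^ 2 - (a + y * I) ^ 2) (hw_re : 0 < w.re) :
    ∫ θ in (0 : ℝ)..2 * Real.pi, ((a + y * I) * cos θ - x * I * sin θ - S)⁻¹ =
      -2 * Real.pi / w := by
  have hw' : w ^ 2 = S ^ 2 + (-x : ℝ) ^ 2 - (a + y * I) ^ 2 := by push_cast; rw [hw, neg_sq]
  have hm := norm_add_mul_I_lt_norm_add haS hw hw_re
  have hn := norm_add_mul_I_lt_norm_add haS hw' hw_re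
  have hsub : ∀ θ : ℝ, (a + y * I) * cos θ - x * I * sin θ - S =
      (a + y * I) * cos θ + -(x * I) * sin θ - S := fun θ => by ring
  simp only [hsub]
  refine integral_inv_mul_cos_add_mul_sin_sub ?_ ?_ ?_
  · linear_combination hw + x ^ 2 * I_sq
  · have e : (a + y * I) + -(x * I) * I = (a + x : ℂ) + y * I := by
      linear_combination (-x) * I_sq
    rwa [e]
  · have e : (a + y * I) - -(x * I) * I = (a : ℂ) + (-x : ℝ) + y * I := by
      push_cast
      linear_combination x * I_sq
    rwa [e]

theorem re_cpow_one_half_pos {z : ℂ} (hz : 0 < z.re) : 0 < (z ^ ((1 : ℂ) / 2)).re := by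
  rw [one_div, cpow_inv_two_re]
  exact Real.sqrt_pos.2 (by linarith [re_le_norm z])

theorem abs_two_mul_mul_lt_sqrt {ρ σ lam : ℝ} (hσ : 0 < 1 - σ) (hρ : 2 * ρ ^ 2 < 1 + σ)
    (hlam : lam = 1 / Real.sqrt (1 - σ)) :
    |2 * lam * ρ| < Real.sqrt (2 * ((1 + σ) / (1 - σ))) := by
  rw [← Real.sqrt_sq_eq_abs, hlam]
  refine Real.sqrt_lt_sqrt (sq_nonneg _) ?_
  rw [mul_pow, mul_pow, div_pow, one_pow, Real.sq_sqrt hσ.le]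
  field_simp
  nlinarith

theorem radicand_eq (lam kap ξ δ ρ η S s t : ℂ) (hξδ : ξ * δ = 2 * ρ) (hS : S ^ 2 = 2 * η) :
    lam ^ 2 * ξ ^ 2 * (s - I * δ) ^ 2 + kap ^ 2 * ξ ^ 2 * t ^ 2 + 2 * η =
      S ^ 2 + (kap * ξ * t) ^ 2 - (2 * lam * ρ + lam * ξ * s * I) ^ 2 := by
  linear_combination lam ^ 2 * (-2 * I * (ξ * s) + I ^ 2 * (ξ * δ + 2 * ρ)) * hξδ
    + lam ^ 2 * (4 * ρ ^ 2 + (ξ * s) ^ 2) * I_sq - hS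

theorem contour_integral_formula_general (ρ σ : ℝ) (h1 : 1 - σ ^ 2 > 0) (h2 : 1 - 2 * ρ ^ 2 + σ > 0)
    (ξ η lam kap δ : ℝ) (hξ : ξ = 1 - 2 * ρ ^ 2 + σ) (hη : η = (1 + σ) / (1 - σ))
    (hlam : lam = 1 / Real.sqrt (1 - σ))
    (hδ : δ = 2 * ρ / ξ) :
    ∀ u v : ℝ,
      (∫ θ in (0 : ℝ)..(2 * Real.pi),
        ((2 * lam * ρ * Real.cos θ : ℂ) + Complex.I * lam * ξ * ((u : ℂ) + v) * Real.cos θ -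
          Complex.I * kap * ξ * ((u : ℂ) - v) * Real.sin θ - (Real.sqrt (2 * η) : ℂ))⁻¹) =
      -2 * Real.pi /
        (((lam : ℂ) ^ 2 * ξ ^ 2 * ((u : ℂ) + v - Complex.I * δ) ^ 2 +
          (kap : ℂ) ^ 2 * ξ ^ 2 * (-(u : ℂ) + v) ^ 2 + 2 * η) ^ ((1 : ℂ) / 2)) := by
  intro u v
  set S := Real.sqrt (2 * η) with hSdef
  have hσ : 0 < 1 - σ := by nlinarith
  have hS : S ^ 2 = 2 * η :=
    Real.sq_sqrt (by rw [hη]; exact mul_nonneg zero_le_two (div_nonneg (by nlinarith) hσ.le))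
  have ha : |2 * lam * ρ| < S := by
    rw [hSdef, hη]; exact abs_two_mul_mul_lt_sqrt hσ (by linarith) hlam
  have hintegrand : ∀ θ : ℝ, (2 * lam * ρ * Real.cos θ : ℂ) + I * lam * ξ * ((u : ℂ) + v) *
      Real.cos θ - I * kap * ξ * ((u : ℂ) - v) * Real.sin θ - (S : ℂ) =
      ((2 * lam * ρ : ℝ) + (lam * ξ * (u + v) : ℝ) * I) * cos θ -
        (kap * ξ * (u - v) : ℝ) * I * sin θ - S := fun θ => by
    push_cast; ring
  have hradicand : (lam : ℂ) ^ 2 * ξ ^ 2 * ((u : ℂ) + v - I * δ) ^ 2 +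
      (kap : ℂ) ^ 2 * ξ ^ 2 * (-(u : ℂ) + v) ^ 2 + 2 * η =
      (S : ℂ) ^ 2 + (kap * ξ * (u - v) : ℝ) ^ 2 -
        ((2 * lam * ρ : ℝ) + (lam * ξ * (u + v) : ℝ) * I) ^ 2 := by
    have hξδ : (ξ : ℂ) * δ = 2 * ρ := by
      rw [hδ]; push_cast; field_simp [hξ ▸ h2.ne']
    push_cast
    have hS' : (S : ℂ) ^ 2 = 2 * η := by exact_mod_cast hS
    linear_combination radicand_eq lam kap ξ δ ρ η S (u + v) (-u + v) hξδ hS'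
  simp only [hintegrand, hradicand]
  refine integral_inv_cos_sin_sub_of_real ha ?_ (re_cpow_one_half_pos ?_)
  · rw [one_div, cpow_ofNat_inv_pow]
  · simp only [sq, sub_re, add_re, mul_re, add_im, mul_im, ofReal_re, ofReal_im, I_re, I_im]
    nlinarith [abs_mul_abs_self (2 * lam * ρ), mul_self_lt_mul_self (abs_nonneg _) ha,
      mul_self_nonneg (kap * ξ * (u - v)), mul_self_nonneg (lam * ξ * (u + v))]

theorem contour_integral_formula (ρ σ : ℝ) (h1 : 1 - σ ^ 2 > 0) (h2 : 1 - 2 * ρ ^ 2 + σ > 0)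
    (ξ η lam kap δ : ℝ) (hξ : ξ = 1 - 2 * ρ ^ 2 + σ) (hη : η = (1 + σ) / (1 - σ))
    (hlam : lam = 1 / Real.sqrt (1 - σ)) (hkap : kap = 1 / Real.sqrt (1 - 2 * ρ ^ 2 + σ))
    (hδ : δ = 2 * ρ / ξ) :
    ∀ u v : ℝ,
      (∫ θ in (0 : ℝ)..(2 * Real.pi),
        ((2 * lam * ρ * Real.cos θ : ℂ) + Complex.I * lam * ξ * ((u : ℂ) + v) * Real.cos θ -
          Complex.I * kap * ξ * ((u : ℂ) - v) * Real.sin θ - (Real.sqrt (2 * η) : ℂ))⁻¹) =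
      -2 * Real.pi /
        (((lam : ℂ) ^ 2 * ξ ^ 2 * ((u : ℂ) + v - Complex.I * δ) ^ 2 +
          (kap : ℂ) ^ 2 * ξ ^ 2 * (-(u : ℂ) + v) ^ 2 + 2 * η) ^ ((1 : ℂ) / 2)) :=
  contour_integral_formula_general ρ σ h1 h2 ξ η lam kap δ hξ hη hlam hδ
end

section
/- Let γ > 0, λ > 0, α > 0, δ ∈ ℝ with α > λ|δ|, and c ∈ ℝ. Then ∫_ℝ exp(−γ·√(λ²(s−iδ)² + α²))·(λ²(s−iδ)² + α²)^{−1/2}·exp(−ics) ds = (2/λ)·exp(cδ)·K₀((α/λ)·√(γ²λ² + c²)), where the complex square root is the principal branch and K₀(z) = ∫₀^∞ exp(−z cosh t) dt. -/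
open MeasureTheory

/-- The modified Bessel function of the second kind `K₀(z)` for complex argument with
positive real part, defined by `K₀(z) = ∫₀^∞ exp(-z cosh t) dt`. -/
noncomputable def besselK0 (z : ℂ) : ℂ :=
  ∫ t in Set.Ioi (0 : ℝ), Complex.exp (-z * Real.cosh t)

/-!
With `w = s - iδ` the integrand is `e^{cδ} F(w)`, where `F` is holomorphic on the strip
`|Im w| < α/λ` and decays like `e^{-γλ|Re w|}` there, so the line `Im w = -δ` can be moved to the
real axis. On the real axis the substitution `x = (α/λ) sinh t` turns the integral into
`λ⁻¹ ∫ exp(-a cosh t - i b sinh t) dt` with `a = γα`, `b = cα/λ`. Writing `a + ib = r e^{iθ}` with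
`|θ| < π/2`, this integrand is `exp(-r cosh(t + iθ))`, and a second contour shift, to `θ = 0`,
leaves `∫_ℝ exp(-r cosh t) dt = 2 K₀(r)`.
-/

open Complex Filter Set Topology
open scoped Real

theorem integral_add_mul_I_eq_of_tendsto {f : ℂ → ℂ} {y₁ y₂ : ℝ}
    (hf : ∀ z : ℂ, z.im ∈ uIcc y₁ y₂ → DifferentiableAt ℂ f z) {B : ℝ → ℝ}
    (hB : ∀ x : ℝ, ∀ y ∈ uIcc y₁ y₂, ‖f (x + y * I)‖ ≤ B |x|) (hB0 : Tendsto B atTop (𝓝 0))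
    (hi₁ : Integrable fun x : ℝ => f (x + y₁ * I))
    (hi₂ : Integrable fun x : ℝ => f (x + y₂ * I)) :
    ∫ x : ℝ, f (x + y₁ * I) = ∫ x : ℝ, f (x + y₂ * I) := by
  have rect (T : ℝ) :
      ((∫ x in -T..T, f (x + y₁ * I)) - ∫ x in -T..T, f (x + y₂ * I)) +
        (I • (∫ y in y₁..y₂, f (T + y * I)) - I • ∫ y in y₁..y₂, f ((-T : ℝ) + y * I)) =
        0 := by
    have := integral_boundary_rect_eq_zero_of_differentiableOn f (⟨-T, y₁⟩ : ℂ) ⟨T, y₂⟩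
      fun z hz => (hf z ((mem_reProdIm).1 hz).2).differentiableWithinAt
    simp only [ofReal_neg] at this ⊢
    rw [← this]
    ring
  have vert (p : ℝ → ℝ) (hp : ∀ T, |p T| = |T|) :
      Tendsto (fun T : ℝ => I • ∫ y in y₁..y₂, f (p T + y * I)) atTop (𝓝 0) := by
    have hlim : Tendsto (fun T : ℝ => B |T| * |y₂ - y₁|) atTop (𝓝 0) := by
      simpa using ((hB0.comp tendsto_abs_atTop_atTop).mul_const |y₂ - y₁|)
    refine squeeze_zero_norm (fun T => ?_) hlim
    rw [norm_smul, norm_I, one_mul, ← hp T]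
    exact intervalIntegral.norm_integral_le_of_norm_le_const fun y hy =>
      hB (p T) y (uIoc_subset_uIcc hy)
  have lim := ((intervalIntegral_tendsto_integral hi₁ tendsto_neg_atTop_atBot tendsto_id).sub
    (intervalIntegral_tendsto_integral hi₂ tendsto_neg_atTop_atBot tendsto_id)).add
    ((vert id fun _ => rfl).sub (vert Neg.neg abs_neg))
  simp only [id, rect, sub_zero, add_zero] at lim
  exact sub_eq_zero.1 (tendsto_nhds_unique lim tendsto_const_nhds)

theorem integrable_exp_neg_mul_abs {k : ℝ} (hk : 0 < k) :
    Integrable fun x : ℝ => Real.exp (-k * |x|) := by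
  have hO : (fun x : ℝ => Real.exp (-k * |x|)) =O[atTop] fun x => Real.exp (-k * x) :=
    (Asymptotics.isBigO_refl _ _).congr'
      ((eventually_ge_atTop 0).mono fun x hx => by simp only [abs_of_nonneg hx]) EventuallyEq.rfl
  exact LocallyIntegrable.integrable_of_isBigO_atTop_of_norm_isNegInvariant
    (Continuous.locallyIntegrable (by fun_prop))
    (ae_of_all _ fun x => by simp) hO ⟨Ioi 0, Ioi_mem_atTop 0, exp_neg_integrableOn_Ioi 0 hk⟩

theorem integral_add_mul_I_eq_of_exp_decay {f : ℂ → ℂ} {y₁ y₂ C k : ℝ} (hk : 0 < k)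
    (hf : ∀ z : ℂ, z.im ∈ uIcc y₁ y₂ → DifferentiableAt ℂ f z)
    (hB : ∀ x : ℝ, ∀ y ∈ uIcc y₁ y₂, ‖f (x + y * I)‖ ≤ C * Real.exp (-k * |x|)) :
    ∫ x : ℝ, f (x + y₁ * I) = ∫ x : ℝ, f (x + y₂ * I) := by
  have integrable (y : ℝ) (hy : y ∈ uIcc y₁ y₂) : Integrable fun x : ℝ => f (x + y * I) := by
    refine ((integrable_exp_neg_mul_abs hk).const_mul C).mono' ?_ (ae_of_all _ (hB · y hy))
    refine (continuous_iff_continuousAt.2 fun x => ?_).aestronglyMeasurable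
    exact (hf _ (by simpa using hy)).continuousAt.comp (by fun_prop)
  refine integral_add_mul_I_eq_of_tendsto (B := fun t => C * Real.exp (-k * t)) hf hB ?_
    (integrable y₁ left_mem_uIcc) (integrable y₂ right_mem_uIcc)
  simpa using (Real.tendsto_exp_atBot.comp
    (tendsto_id.const_mul_atTop_of_neg (neg_neg_iff_pos.2 hk))).const_mul C

theorem integral_cexp_neg_mul_cosh (r : ℝ) :
    ∫ t : ℝ, cexp (-r * cosh t) = 2 * besselK0 r := by
  have h (t : ℝ) : cexp (-r * cosh t) = (Real.exp (-r * Real.cosh |t|) : ℂ) := by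
    push_cast [Real.cosh_abs]
    rfl
  rw [integral_congr_ae (ae_of_all _ h), integral_complex_ofReal,
    integral_comp_abs (f := fun t => Real.exp (-r * Real.cosh t)), ofReal_mul,
    ← integral_complex_ofReal, besselK0]
  push_cast
  rfl

theorem norm_cexp_neg_mul_cosh_add_mul_I (r x y : ℝ) :
    ‖cexp (-r * cosh (x + y * I))‖ = Real.exp (-(r * (Real.cosh x * Real.cos y))) := by
  rw [norm_exp, cosh_add, cosh_mul_I, sinh_mul_I, ← ofReal_cosh, ← ofReal_sinh, ← ofReal_cos,
    ← ofReal_sin]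
  simp only [mul_re, add_re, neg_re, neg_im, ofReal_re, ofReal_im, I_re, I_im, mul_im]
  ring_nf

theorem Real.abs_le_cosh (x : ℝ) : |x| ≤ Real.cosh x :=
  calc |x| ≤ Real.sinh |x| := Real.self_le_sinh_iff.2 (abs_nonneg x)
    _ ≤ Real.cosh |x| := (Real.sinh_lt_cosh _).le
    _ = Real.cosh x := Real.cosh_abs x

theorem norm_cexp_neg_mul_cosh_add_mul_I_le {r θ y : ℝ} (hr : 0 ≤ r) (hθ : |θ| ≤ π / 2)
    (hy : |y| ≤ |θ|) (x : ℝ) :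
    ‖cexp (-r * cosh (x + y * I))‖ ≤ Real.exp (-(r * Real.cos θ) * |x|) := by
  have hcos : Real.cos θ ≤ Real.cos y := by
    rw [← Real.cos_abs θ, ← Real.cos_abs y]
    exact Real.cos_le_cos_of_nonneg_of_le_pi (abs_nonneg y) (by linarith [Real.pi_pos]) hy
  have hcos₀ : 0 ≤ Real.cos θ := Real.cos_nonneg_of_neg_pi_div_two_le_of_le (abs_le.1 hθ).1
    (abs_le.1 hθ).2
  rw [norm_cexp_neg_mul_cosh_add_mul_I, Real.exp_le_exp, neg_mul, neg_le_neg_iff]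
  calc r * Real.cos θ * |x| ≤ r * Real.cos θ * Real.cosh x := by
        gcongr; exact Real.abs_le_cosh x
    _ ≤ r * (Real.cosh x * Real.cos y) := by
        rw [mul_comm (Real.cosh x), ← mul_assoc]; gcongr

theorem integral_cexp_neg_mul_cosh_add_mul_I {r θ : ℝ} (hr : 0 < r) (hθ : |θ| < π / 2) :
    ∫ x : ℝ, cexp (-r * cosh (x + θ * I)) = 2 * besselK0 r := by
  have hk : 0 < r * Real.cos θ := mul_pos hr (Real.cos_pos_of_mem_Ioo (abs_lt.1 hθ))
  rw [integral_add_mul_I_eq_of_exp_decay (y₂ := 0) (C := 1) hk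
    (fun z _ => (differentiable_cosh.const_mul _).cexp z) fun x y hy => ?_]
  · simpa using integral_cexp_neg_mul_cosh r
  · rw [one_mul]
    refine norm_cexp_neg_mul_cosh_add_mul_I_le hr.le hθ.le ?_ x
    simpa using abs_sub_right_of_mem_uIcc hy

theorem integral_cexp_neg_mul_cosh_sub_I_mul_sinh {a : ℝ} (ha : 0 < a) (b : ℝ) :
    ∫ t : ℝ, cexp (-a * cosh t - I * b * sinh t) = 2 * besselK0 √(a ^ 2 + b ^ 2) := by
  set ζ : ℂ := a + b * I
  have hre : (‖ζ‖ : ℂ) * Complex.cos (arg ζ) = a := by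
    rw [← ofReal_cos, ← ofReal_mul, norm_mul_cos_arg]; simp [ζ]
  have him : (‖ζ‖ : ℂ) * Complex.sin (arg ζ) = b := by
    rw [← ofReal_sin, ← ofReal_mul, norm_mul_sin_arg]; simp [ζ]
  have hζ : 0 < ‖ζ‖ := by rw [norm_add_mul_I]; positivity
  have hθ : |arg ζ| < π / 2 := abs_arg_lt_pi_div_two_iff.2 (Or.inl (by simpa [ζ]))
  rw [← norm_add_mul_I, ← integral_cexp_neg_mul_cosh_add_mul_I hζ hθ]
  congr 1 with t
  congr 1
  rw [cosh_add, cosh_mul_I, sinh_mul_I]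
  linear_combination cosh t * hre + I * sinh t * him

theorem integral_comp_mul_sinh {E : Type*} [NormedAddCommGroup E] [NormedSpace ℝ E] {a : ℝ}
    (ha : 0 < a) (g : ℝ → E) :
    ∫ t : ℝ, (a * Real.cosh t) • g (a * Real.sinh t) = ∫ x : ℝ, g x := by
  have hsurj : range (fun t => a * Real.sinh t) = univ :=
    range_eq_univ.2 fun x => ⟨Real.arsinh (x / a), by simp [mul_div_cancel₀ x ha.ne']⟩
  have := integral_image_eq_integral_abs_deriv_smul MeasurableSet.univ
    (fun t _ => ((Real.hasDerivAt_sinh t).const_mul a).hasDerivWithinAt)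
    (fun s _ t _ hst => Real.sinh_injective (mul_left_cancel₀ ha.ne' hst)) g
  rw [image_univ, hsurj, setIntegral_univ, setIntegral_univ] at this
  rw [this]
  congr 1 with t
  rw [abs_of_pos (by positivity)]

theorem Complex.sqrt_re_le_re_cpow_half (z : ℂ) : √z.re ≤ (z ^ ((1 : ℂ) / 2)).re := by
  rw [one_div, cpow_inv_two_re]
  exact Real.sqrt_le_sqrt (by linarith [re_le_norm z])

theorem Complex.norm_cpow_neg_half_le {z : ℂ} (hz : 0 < z.re) :
    ‖z ^ (-(1 : ℂ) / 2)‖ ≤ (√z.re)⁻¹ := by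
  have : -(1 : ℂ) / 2 = ((-(1 / 2) : ℝ) : ℂ) := by push_cast; ring
  rw [this, norm_cpow_real, Real.rpow_neg (norm_nonneg z), ← Real.sqrt_eq_rpow]
  exact inv_anti₀ (Real.sqrt_pos.2 hz) (Real.sqrt_le_sqrt (re_le_norm z))

section OuterIntegrand

variable (γ lam α c : ℝ)

noncomputable def outerIntegrand (w : ℂ) : ℂ :=
  cexp (-(γ : ℂ) * (((lam : ℂ) ^ 2 * w ^ 2 + (α : ℂ) ^ 2) ^ ((1 : ℂ) / 2))) *
    (((lam : ℂ) ^ 2 * w ^ 2 + (α : ℂ) ^ 2) ^ (-(1 : ℂ) / 2)) * cexp (-I * c * w)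

variable {γ lam α}

theorem le_re_sq_mul_sq_add_sq {δ y : ℝ} (hy : |y| ≤ |δ|) (x : ℝ) :
    lam ^ 2 * x ^ 2 + (α ^ 2 - lam ^ 2 * δ ^ 2) ≤
      ((lam : ℂ) ^ 2 * (x + y * I) ^ 2 + (α : ℂ) ^ 2).re := by
  have hre : ((lam : ℂ) ^ 2 * (x + y * I) ^ 2 + (α : ℂ) ^ 2).re
      = lam ^ 2 * (x ^ 2 - y ^ 2) + α ^ 2 := by
    simp only [add_re, mul_re, mul_im, add_im, I_re, I_im, ofReal_re, ofReal_im, pow_two]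
    ring
  have : y ^ 2 ≤ δ ^ 2 := sq_le_sq.2 hy
  rw [hre]
  nlinarith [sq_nonneg lam]

theorem differentiableAt_outerIntegrand {δ : ℝ} (hδ : lam ^ 2 * δ ^ 2 < α ^ 2) {z : ℂ}
    (hz : |z.im| ≤ |δ|) : DifferentiableAt ℂ (outerIntegrand γ lam α c) z := by
  have hslit : (lam : ℂ) ^ 2 * z ^ 2 + (α : ℂ) ^ 2 ∈ slitPlane := by
    have := le_re_sq_mul_sq_add_sq (lam := lam) (α := α) hz z.re
    rw [re_add_im] at this
    exact Or.inl (by nlinarith [sq_nonneg (lam * z.re)])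
  unfold outerIntegrand
  fun_prop (disch := exact hslit)

theorem norm_outerIntegrand_le (hγ : 0 ≤ γ) {δ y : ℝ} (hδ : lam ^ 2 * δ ^ 2 < α ^ 2)
    (hy : |y| ≤ |δ|) (x : ℝ) :
    ‖outerIntegrand γ lam α c (x + y * I)‖ ≤
      Real.exp (|c| * |δ|) / √(α ^ 2 - lam ^ 2 * δ ^ 2) * Real.exp (-(γ * |lam|) * |x|) := by
  set Q := (lam : ℂ) ^ 2 * (x + y * I) ^ 2 + (α : ℂ) ^ 2
  have hQ : lam ^ 2 * x ^ 2 + (α ^ 2 - lam ^ 2 * δ ^ 2) ≤ Q.re := le_re_sq_mul_sq_add_sq hy x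
  have hm : 0 < α ^ 2 - lam ^ 2 * δ ^ 2 := by linarith
  have h₁ : ‖cexp (-(γ : ℂ) * Q ^ ((1 : ℂ) / 2))‖ ≤ Real.exp (-(γ * |lam|) * |x|) := by
    have : |lam| * |x| ≤ √Q.re := by
      rw [← abs_mul, ← Real.sqrt_sq_eq_abs]
      exact Real.sqrt_le_sqrt (by nlinarith)
    rw [norm_exp, Real.exp_le_exp, ← ofReal_neg, re_ofReal_mul]
    nlinarith [sqrt_re_le_re_cpow_half Q]
  have h₂ : ‖Q ^ (-(1 : ℂ) / 2)‖ ≤ (√(α ^ 2 - lam ^ 2 * δ ^ 2))⁻¹ :=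
    (norm_cpow_neg_half_le (by nlinarith [sq_nonneg (lam * x)])).trans
      (inv_anti₀ (Real.sqrt_pos.2 hm) (Real.sqrt_le_sqrt (by nlinarith [sq_nonneg (lam * x)])))
  have h₃ : ‖cexp (-I * c * (x + y * I))‖ ≤ Real.exp (|c| * |δ|) := by
    rw [norm_exp, Real.exp_le_exp]
    simp only [mul_re, mul_im, neg_re, neg_im, I_re, I_im, add_re, add_im, ofReal_re,
      ofReal_im]
    calc _ = c * y := by ring
      _ ≤ |c| * |y| := (le_abs_self _).trans (abs_mul c y).le
      _ ≤ |c| * |δ| := by gcongr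
  unfold outerIntegrand
  rw [norm_mul, norm_mul]
  calc _ ≤ Real.exp (-(γ * |lam|) * |x|) * (√(α ^ 2 - lam ^ 2 * δ ^ 2))⁻¹ *
        Real.exp (|c| * |δ|) := by gcongr
    _ = _ := by ring

theorem cosh_smul_outerIntegrand_sinh (hlam : 0 < lam) (hα : 0 < α) (t : ℝ) :
    (α / lam * Real.cosh t) • outerIntegrand γ lam α c ↑(α / lam * Real.sinh t) =
      1 / lam * cexp (-↑(γ * α) * cosh t - I * ↑(c * α / lam) * sinh t) := by
  set w : ℂ := ↑(α * Real.cosh t)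
  have hw : 0 < w.re := by simp only [w, ofReal_re]; positivity
  have hQ : (lam : ℂ) ^ 2 * ↑(α / lam * Real.sinh t) ^ 2 + (α : ℂ) ^ 2 = w ^ 2 := by
    have : (lam : ℂ) ≠ 0 := ofReal_ne_zero.2 hlam.ne'
    simp only [w]
    push_cast
    field_simp
    linear_combination -(α : ℂ) ^ 2 * cosh_sq (t : ℂ)
  have hsqrt : (w ^ 2) ^ ((1 : ℂ) / 2) = w := by rw [one_div]; exact sq_cpow_two_inv hw
  have hinv : (w ^ 2) ^ (-(1 : ℂ) / 2) = w⁻¹ := by rw [neg_div, cpow_neg, hsqrt]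
  unfold outerIntegrand
  rw [hQ, hsqrt, hinv, real_smul]
  calc _ = (↑(α / lam * Real.cosh t) * w⁻¹) *
        (cexp (-↑γ * w) * cexp (-I * ↑c * ↑(α / lam * Real.sinh t))) := by ring
    _ = _ := by
      rw [← exp_add]
      congr 1
      · rw [← ofReal_inv, ← ofReal_mul,
          show α / lam * Real.cosh t * (α * Real.cosh t)⁻¹ = 1 / lam by field_simp]
        push_cast
        rfl
      · simp only [w]
        push_cast
        congr 1
        ring

theorem exp_mul_outerIntegrand_sub_I_mul (δ s : ℝ) :
    Real.exp (c * δ) * outerIntegrand γ lam α c (s - I * δ) =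
      cexp (-(γ : ℂ) * (((lam : ℂ) ^ 2 * ((s : ℂ) - I * δ) ^ 2 + (α : ℂ) ^ 2) ^ ((1 : ℂ) / 2))) *
        (((lam : ℂ) ^ 2 * ((s : ℂ) - I * δ) ^ 2 + (α : ℂ) ^ 2) ^ (-(1 : ℂ) / 2)) *
        cexp (-I * c * s) := by
  have hexp : cexp (-I * c * (s - I * δ)) = cexp (-I * c * s) / cexp (c * δ) := by
    rw [← exp_sub]
    congr 1
    linear_combination (c * δ : ℂ) * I_mul_I
  rw [outerIntegrand, hexp, ofReal_exp]
  push_cast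
  field_simp

theorem integral_outerIntegrand_ofReal (hγ : 0 < γ) (hlam : 0 < lam) (hα : 0 < α) :
    ∫ x : ℝ, outerIntegrand γ lam α c x =
      2 / lam * besselK0 ↑(α / lam * √(γ ^ 2 * lam ^ 2 + c ^ 2)) := by
  have hr : √((γ * α) ^ 2 + (c * α / lam) ^ 2) = α / lam * √(γ ^ 2 * lam ^ 2 + c ^ 2) := by
    rw [show (γ * α) ^ 2 + (c * α / lam) ^ 2 = (α / lam) ^ 2 * (γ ^ 2 * lam ^ 2 + c ^ 2) by
      field_simp, Real.sqrt_mul (sq_nonneg _), Real.sqrt_sq (by positivity)]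
  rw [← integral_comp_mul_sinh (div_pos hα hlam)]
  simp_rw [cosh_smul_outerIntegrand_sinh c hlam hα]
  rw [integral_const_mul, integral_cexp_neg_mul_cosh_sub_I_mul_sinh (by positivity), hr]
  ring

end OuterIntegrand

theorem outer_fourier_integral_n_two (γ lam α δ : ℝ) (hγ : 0 < γ) (hlam : 0 < lam)
    (hα : 0 < α) (hαδ : lam * |δ| < α) (c : ℝ) :
    (∫ s : ℝ,
        Complex.exp (-(γ : ℂ) *
          (((lam : ℂ) ^ 2 * ((s : ℂ) - Complex.I * δ) ^ 2 + (α : ℂ) ^ 2) ^ ((1 : ℂ) / 2))) *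
        (((lam : ℂ) ^ 2 * ((s : ℂ) - Complex.I * δ) ^ 2 + (α : ℂ) ^ 2) ^ (-(1 : ℂ) / 2)) *
        Complex.exp (-Complex.I * c * s)) =
    (2 / (lam : ℂ)) * (Real.exp (c * δ) : ℂ) *
      besselK0 (((α / lam) * Real.sqrt (γ ^ 2 * lam ^ 2 + c ^ 2) : ℝ) : ℂ) := by
  have hδ : lam ^ 2 * δ ^ 2 < α ^ 2 := by
    rw [← sq_abs δ, ← mul_pow]
    exact pow_lt_pow_left₀ hαδ (by positivity) two_ne_zero
  have hstrip (y : ℝ) (hy : y ∈ uIcc (-δ) 0) : |y| ≤ |δ| := by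
    simpa using abs_sub_right_of_mem_uIcc hy
  have hshift : ∫ s : ℝ, outerIntegrand γ lam α c (s - I * δ) =
      ∫ s : ℝ, outerIntegrand γ lam α c s := by
    simpa [sub_eq_add_neg, mul_comm I] using integral_add_mul_I_eq_of_exp_decay (y₂ := 0)
      (mul_pos hγ (abs_pos.2 hlam.ne'))
      (fun z hz => differentiableAt_outerIntegrand c hδ (hstrip _ hz))
      (fun x y hy => norm_outerIntegrand_le c hγ.le hδ (hstrip y hy) x)
  simp_rw [← exp_mul_outerIntegrand_sub_I_mul, integral_const_mul, hshift,
    integral_outerIntegrand_ofReal c hγ hlam hα]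
  ring
end
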